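/- arXiv:1405.5317 — 2 statements merged into one kernel-verified Lean document; each statement's English description precedes it below -/
import Mathlib

section
/- Let B₁, B₂ be bounded operators on H satisfying ‖[B₁, B₂(a)]‖ ≤ c·D_κ(a) for all a ∈ ℝ⁴. Let χ : ℝ⁴ → ℂ be measurable with |χ(x)| ≤ C·(λ + |x|)^{−r} for all x, where r ≥ 4 + κ and |x| is the Euclidean norm on ℝ⁴. Then there exists a constant c' such that ‖[B₁, (B₂(χ))(a)]‖ ≤ c'·D_κ(a) for all a ∈ ℝ⁴, i.e. the commutator of B₁ with the smeared operator B₂(χ) is again of κ-type. -/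
/-!
Conjugating the smeared operator by `U a` and commuting `B₁` under the integral gives
`[B₁, B₂(χ)(a)] = ∫ χ(x) [B₁, B₂(x + a)] dx`, so it suffices to bound
`∫ (λ + |x|)^{-r} D_κ(x + a) dx` by a multiple of `D_κ(a)`.
Write `D_κ = λ^κ ρ^{-κ}` with `ρ(a) = λ + max(|a⃗| - |a⁰|, 0)`, a `2`-Lipschitz function.
Near the origin, `|x| ≤ ρ(a)/6`, Lipschitz continuity gives `ρ(x + a) ≥ ρ(a)/2`, hence
`D_κ(x + a) ≤ 2^κ D_κ(a)`. Far from it we only use `D_κ ≤ 1`, and since `r ≥ 4 + κ` the tail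
`∫_{|x| ≥ R} (λ + |x|)^{-r} dx` is bounded, by scaling, by a multiple of `R^{-κ}`; for
`R = ρ(a)/6` this is again a multiple of `D_κ(a)`.
-/

noncomputable section

open ContinuousLinearMap MeasureTheory

/-- Minkowski space modeled as `ℝ⁴` with the Euclidean structure. -/
abbrev M4 : Type := EuclideanSpace ℝ (Fin 4)

/-- Euclidean norm of the spatial part `a⃗` of `a ∈ ℝ⁴`. -/
def snorm3 (a : M4) : ℝ := Real.sqrt ((a 1) ^ 2 + (a 2) ^ 2 + (a 3) ^ 2)

/-- The commutator-bounding function `D_κ` (with length parameter `lam`). -/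
def Dkappa (lam κ : ℝ) (a : M4) : ℝ :=
  if (snorm3 a) ^ 2 ≤ (a 0) ^ 2 then 1
  else lam ^ κ / (lam + snorm3 a - |a 0|) ^ κ

open Module
open scoped NNReal

lemma Continuous.clm_apply_of_norm_le {𝕜 X E F : Type*} [NontriviallyNormedField 𝕜]
    [TopologicalSpace X] [SeminormedAddCommGroup E] [NormedSpace 𝕜 E] [SeminormedAddCommGroup F]
    [NormedSpace 𝕜 F] {f : X → E →L[𝕜] F} {g : X → E} {K : ℝ}
    (hf : ∀ v, Continuous fun x => f x v) (hK : ∀ x, ‖f x‖ ≤ K) (hg : Continuous g) :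
    Continuous fun x => f x (g x) := by
  refine continuous_iff_continuousAt.2 fun x₀ => tendsto_iff_norm_sub_tendsto_zero.2 ?_
  have hsplit : ∀ x, ‖f x (g x) - f x₀ (g x₀)‖
      ≤ K * ‖g x - g x₀‖ + ‖f x (g x₀) - f x₀ (g x₀)‖ := fun x =>
    calc ‖f x (g x) - f x₀ (g x₀)‖ = ‖f x (g x - g x₀) + (f x (g x₀) - f x₀ (g x₀))‖ := by
          rw [map_sub]; abel_nf
      _ ≤ ‖f x‖ * ‖g x - g x₀‖ + ‖f x (g x₀) - f x₀ (g x₀)‖ :=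
          (norm_add_le _ _).trans (add_le_add_left ((f x).le_opNorm _) _)
      _ ≤ K * ‖g x - g x₀‖ + ‖f x (g x₀) - f x₀ (g x₀)‖ := by gcongr; exact hK x
  refine squeeze_zero (fun _ => norm_nonneg _) hsplit ?_
  simpa using ((tendsto_iff_norm_sub_tendsto_zero.1 (hg.tendsto x₀)).const_mul K).add
    (tendsto_iff_norm_sub_tendsto_zero.1 ((hf (g x₀)).tendsto x₀))

/-- The paper's `B(x) = U(x) B U(x)⁻¹`. -/
def translateOp {G R : Type*} [Neg G] [Mul R] (U : G → R) (B : R) (x : G) : R := U x * B * U (-x)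

section Translation

variable {H G : Type*} [NormedAddCommGroup H] [InnerProductSpace ℂ H]
  [CompleteSpace H] [AddCommGroup G]

structure IsContinuousUnitaryRep [TopologicalSpace G] (U : G → H →L[ℂ] H) : Prop where
  map_zero : U 0 = 1
  map_add : ∀ x y, U (x + y) = U x * U y
  adjoint_eq : ∀ x, adjoint (U x) = U (-x)
  continuous_apply : ∀ ψ, Continuous fun x => U x ψ

namespace IsContinuousUnitaryRep

variable [TopologicalSpace G] {U : G → H →L[ℂ] H}

lemma mem_unitary (hU : IsContinuousUnitaryRep U) (x : G) : U x ∈ unitary (H →L[ℂ] H) := by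
  rw [Unitary.mem_iff, star_eq_adjoint, hU.adjoint_eq, ← hU.map_add, ← hU.map_add,
    neg_add_cancel, add_neg_cancel, hU.map_zero, and_self]

lemma translateOp_translateOp (hU : IsContinuousUnitaryRep U) (B : H →L[ℂ] H) (x a : G) :
    translateOp U (translateOp U B x) a = translateOp U B (x + a) := by
  change U a * (U x * B * U (-x)) * U (-a) = U (x + a) * B * U (-(x + a))
  rw [add_comm x a, neg_add_rev, hU.map_add, hU.map_add]
  simp only [mul_assoc]

lemma norm_translateOp (hU : IsContinuousUnitaryRep U) (B : H →L[ℂ] H) (x : G) :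
    ‖translateOp U B x‖ = ‖B‖ := by
  rw [translateOp, CStarRing.norm_mul_mem_unitary _ (hU.mem_unitary _),
    CStarRing.norm_mem_unitary_mul _ (hU.mem_unitary _)]

lemma continuous_translateOp_apply [IsTopologicalAddGroup G] (hU : IsContinuousUnitaryRep U)
    (B : H →L[ℂ] H) (ψ : H) : Continuous fun x => translateOp U B x ψ :=
  Continuous.clm_apply_of_norm_le (f := U) (g := fun x => B (U (-x) ψ)) hU.continuous_apply
    (fun x => opNorm_le_bound _ zero_le_one fun ψ => by
      rw [norm_map_of_mem_unitary (hU.mem_unitary x), one_mul])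
    (B.continuous.comp ((hU.continuous_apply ψ).comp continuous_neg))

variable [IsTopologicalAddGroup G] [SecondCountableTopology G] [MeasurableSpace G]
  [OpensMeasurableSpace G] {μ : Measure G} {χ : G → ℂ}

lemma integrable_smul_translateOp_apply (hU : IsContinuousUnitaryRep U) (hχ : Integrable χ μ)
    (B : H →L[ℂ] H) (a : G) (ψ : H) :
    Integrable (fun x => χ x • translateOp U B (x + a) ψ) μ :=
  hχ.smul_bdd (‖B‖ * ‖ψ‖)
    ((hU.continuous_translateOp_apply B ψ).comp (continuous_add_const a)).aestronglyMeasurable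
    (.of_forall fun x => (le_opNorm _ _).trans_eq (by rw [hU.norm_translateOp]))

lemma translateOp_apply_of_smeared (hU : IsContinuousUnitaryRep U) (hχ : Integrable χ μ)
    {B Bχ : H →L[ℂ] H} (hBχ : ∀ ψ, Bχ ψ = ∫ x, χ x • translateOp U B x ψ ∂μ) (a : G) (ψ : H) :
    translateOp U Bχ a ψ = ∫ x, χ x • translateOp U B (x + a) ψ ∂μ := by
  have hint : Integrable (fun x => χ x • translateOp U B x (U (-a) ψ)) μ := by
    simpa using hU.integrable_smul_translateOp_apply hχ B 0 (U (-a) ψ)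
  calc translateOp U Bχ a ψ = U a (∫ x, χ x • translateOp U B x (U (-a) ψ) ∂μ) := by
        rw [← hBχ]; rfl
    _ = ∫ x, χ x • translateOp U B (x + a) ψ ∂μ := by
        rw [← (U a).integral_comp_comm hint]
        simp_rw [map_smul, ← hU.translateOp_translateOp B _ a]
        rfl

lemma lie_translateOp_apply_of_smeared (hU : IsContinuousUnitaryRep U) (hχ : Integrable χ μ)
    {B Bχ : H →L[ℂ] H} (hBχ : ∀ ψ, Bχ ψ = ∫ x, χ x • translateOp U B x ψ ∂μ) (A : H →L[ℂ] H)
    (a : G) (ψ : H) :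
    ⁅A, translateOp U Bχ a⁆ ψ = ∫ x, χ x • ⁅A, translateOp U B (x + a)⁆ ψ ∂μ := by
  have hint := hU.integrable_smul_translateOp_apply hχ B a
  rw [Ring.lie_def, sub_apply, mul_apply_eq_comp, mul_apply_eq_comp,
    hU.translateOp_apply_of_smeared hχ hBχ,
    hU.translateOp_apply_of_smeared hχ hBχ, ← A.integral_comp_comm (hint ψ),
    ← integral_sub (A.integrable_comp (hint ψ)) (hint (A ψ))]
  simp only [Ring.lie_def, sub_apply, mul_apply_eq_comp, map_smul, smul_sub]

lemma norm_lie_translateOp_le_of_smeared (hU : IsContinuousUnitaryRep U) (hχ : Integrable χ μ)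
    {B Bχ : H →L[ℂ] H} (hBχ : ∀ ψ, Bχ ψ = ∫ x, χ x • translateOp U B x ψ ∂μ) (A : H →L[ℂ] H)
    (a : G) {F : G → ℝ} (hF : Integrable F μ)
    (hle : ∀ x, ‖χ x‖ * ‖⁅A, translateOp U B (x + a)⁆‖ ≤ F x) :
    ‖⁅A, translateOp U Bχ a⁆‖ ≤ ∫ x, F x ∂μ := by
  refine opNorm_le_bound _ (integral_nonneg fun x =>
    (mul_nonneg (norm_nonneg _) (norm_nonneg _)).trans (hle x)) fun ψ => ?_
  rw [hU.lie_translateOp_apply_of_smeared hχ hBχ, ← integral_mul_const]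
  refine norm_integral_le_of_norm_le (hF.mul_const _) (.of_forall fun x => ?_)
  rw [norm_smul]
  calc ‖χ x‖ * ‖⁅A, translateOp U B (x + a)⁆ ψ‖ ≤ ‖χ x‖ * ‖⁅A, translateOp U B (x + a)⁆‖ * ‖ψ‖ := by
        rw [mul_assoc]; exact mul_le_mul_of_nonneg_left (le_opNorm _ _) (norm_nonneg _)
    _ ≤ F x * ‖ψ‖ := mul_le_mul_of_nonneg_right (hle x) (norm_nonneg _)

end IsContinuousUnitaryRep

end Translation

lemma add_rpow_neg_le_of_le {lam R u s r : ℝ} (hlam : 0 < lam) (hR : 0 < R) (hRu : R ≤ u)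
    (hs : 0 ≤ s) (hsr : s ≤ r) : (lam + u) ^ (-r) ≤ 2 ^ s * lam ^ (s - r) * (R + u) ^ (-s) := by
  have hu : 0 < lam + u := by linarith
  calc (lam + u) ^ (-r) = (lam + u) ^ (s - r) * (lam + u) ^ (-s) := by
        rw [← Real.rpow_add hu]; ring_nf
    _ ≤ lam ^ (s - r) * ((R + u) / 2) ^ (-s) := by
        gcongr (?_ : ℝ) * ?_
        · exact Real.rpow_le_rpow_of_nonpos hlam (by linarith) (by linarith)
        · exact Real.rpow_le_rpow_of_nonpos (by linarith) (by linarith) (by linarith)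
    _ = 2 ^ s * lam ^ (s - r) * (R + u) ^ (-s) := by
        rw [Real.div_rpow (by linarith) zero_le_two, Real.rpow_neg zero_le_two,
          div_inv_eq_mul]
        ring

lemma LipschitzWith.half_le_apply_add {E : Type*} [SeminormedAddCommGroup E] {ρ : E → ℝ}
    {L : ℝ≥0} (hρ : LipschitzWith L ρ) {a x : E}
    (hx : ‖x‖ ≤ ρ a / (2 * (L + 1))) : ρ a / 2 ≤ ρ (x + a) := by
  have hlip : ρ a - ρ (x + a) ≤ L * ‖x‖ := by
    have := hρ.dist_le_mul a (x + a)
    rw [Real.dist_eq, dist_eq_norm, sub_add_cancel_right, norm_neg] at this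
    exact (le_abs_self _).trans this
  have hL : (L : ℝ) * ‖x‖ ≤ ρ a / 2 := by
    rw [le_div_iff₀ (by positivity)] at hx
    nlinarith [L.coe_nonneg, norm_nonneg x]
  linarith

lemma add_norm_rpow_neg_mul_rpow_neg_le {E : Type*} [SeminormedAddCommGroup E] {lam κ r m s : ℝ}
    {L : ℝ≥0} {ρ : E → ℝ} (hlam : 0 < lam) (hκ : 0 ≤ κ) (hs : 0 ≤ s)
    (hsr : s ≤ r) (hρ : LipschitzWith L ρ) (hm : 0 < m) (hρm : ∀ x, m ≤ ρ x) (a x : E) :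
    (lam + ‖x‖) ^ (-r) * ρ (x + a) ^ (-κ)
      ≤ 2 ^ κ * ρ a ^ (-κ) * (lam + ‖x‖) ^ (-r)
        + m ^ (-κ) * (2 ^ s * lam ^ (s - r) * (ρ a / (2 * (L + 1)) + ‖x‖) ^ (-s)) := by
  have hρpos : ∀ y, 0 < ρ y := fun y => hm.trans_le (hρm y)
  have hR : 0 < ρ a / (2 * (L + 1)) := by have := hρpos a; positivity
  have hfirst : 0 ≤ 2 ^ κ * ρ a ^ (-κ) * (lam + ‖x‖) ^ (-r) := by have := hρpos a; positivity
  have htail : 0 ≤ m ^ (-κ) * (2 ^ s * lam ^ (s - r) * (ρ a / (2 * (L + 1)) + ‖x‖) ^ (-s)) := by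
    positivity
  rcases le_total ‖x‖ (ρ a / (2 * (L + 1))) with hx | hx
  · have hnear : ρ (x + a) ^ (-κ) ≤ 2 ^ κ * ρ a ^ (-κ) :=
      calc ρ (x + a) ^ (-κ) ≤ (ρ a / 2) ^ (-κ) :=
            Real.rpow_le_rpow_of_nonpos (half_pos (hρpos a)) (hρ.half_le_apply_add hx)
              (neg_nonpos.2 hκ)
        _ = 2 ^ κ * ρ a ^ (-κ) := by
            rw [Real.div_rpow (hρpos a).le zero_le_two, Real.rpow_neg zero_le_two,
              div_inv_eq_mul, mul_comm]
    calc (lam + ‖x‖) ^ (-r) * ρ (x + a) ^ (-κ)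
        ≤ (lam + ‖x‖) ^ (-r) * (2 ^ κ * ρ a ^ (-κ)) :=
          mul_le_mul_of_nonneg_left hnear (by positivity)
      _ ≤ _ := by rw [mul_comm]; exact le_add_of_nonneg_right htail
  · calc (lam + ‖x‖) ^ (-r) * ρ (x + a) ^ (-κ)
        ≤ 2 ^ s * lam ^ (s - r) * (ρ a / (2 * (L + 1)) + ‖x‖) ^ (-s) * m ^ (-κ) :=
          mul_le_mul (add_rpow_neg_le_of_le hlam hR hx hs hsr)
            (Real.rpow_le_rpow_of_nonpos hm (hρm _) (neg_nonpos.2 hκ))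
            (Real.rpow_pos_of_pos (hρpos _) _).le (by positivity)
      _ ≤ _ := by rw [mul_comm]; exact le_add_of_nonneg_left hfirst

lemma add_norm_rpow_neg_eq {E : Type*} [SeminormedAddCommGroup E] [NormedSpace ℝ E] {R : ℝ}
    (hR : 0 < R) (s : ℝ) (x : E) :
    (R + ‖x‖) ^ (-s) = R ^ (-s) * (1 + ‖R⁻¹ • x‖) ^ (-s) := by
  rw [← Real.mul_rpow hR.le (by positivity), norm_smul, Real.norm_of_nonneg (inv_nonneg.2 hR.le),
    mul_add, mul_one, mul_inv_cancel_left₀ hR.ne']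

section WeightedIntegrals

variable {E : Type*} [NormedAddCommGroup E] [NormedSpace ℝ E] [FiniteDimensional ℝ E]
  [MeasurableSpace E] [BorelSpace E] (μ : Measure E) [μ.IsAddHaarMeasure]

lemma integrable_add_norm_rpow_neg {s : ℝ} (hs : finrank ℝ E < s) {R : ℝ} (hR : 0 < R) :
    Integrable (fun x : E => (R + ‖x‖) ^ (-s)) μ := by
  simp_rw [add_norm_rpow_neg_eq hR]
  exact ((integrable_one_add_norm hs).comp_smul (inv_ne_zero hR.ne')).const_mul _

lemma integral_add_norm_rpow_neg (s : ℝ) {R : ℝ} (hR : 0 < R) :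
    ∫ x, (R + ‖x‖) ^ (-s) ∂μ = R ^ (finrank ℝ E - s) * ∫ x, (1 + ‖x‖) ^ (-s) ∂μ := by
  simp_rw [add_norm_rpow_neg_eq hR, integral_const_mul,
    μ.integral_comp_inv_smul_of_nonneg (fun x => (1 + ‖x‖) ^ (-s)) hR.le, smul_eq_mul,
    ← mul_assoc, ← Real.rpow_natCast, ← Real.rpow_add hR, neg_add_eq_sub]

variable {lam κ r m : ℝ} {L : ℝ≥0} {ρ : E → ℝ}

lemma integrable_add_norm_rpow_neg_mul_rpow_neg (hlam : 0 < lam) (hκ : 0 ≤ κ)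
    (hr : finrank ℝ E < r) (hρ : LipschitzWith L ρ) (hm : 0 < m) (hρm : ∀ x, m ≤ ρ x) (a : E) :
    Integrable (fun x => (lam + ‖x‖) ^ (-r) * ρ (x + a) ^ (-κ)) μ := by
  have hρpos : ∀ y, 0 < ρ y := fun y => hm.trans_le (hρm y)
  refine ((integrable_add_norm_rpow_neg μ hr hlam).mul_const (m ^ (-κ))).mono' ?_
    (.of_forall fun x => ?_)
  · refine Continuous.aestronglyMeasurable ?_
    exact (continuous_const.add continuous_norm).rpow_const
      (fun x => .inl (add_pos_of_pos_of_nonneg hlam (norm_nonneg x)).ne') |>.mul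
      ((hρ.continuous.comp (continuous_add_const a)).rpow_const fun x => .inl (hρpos _).ne')
  · rw [Real.norm_of_nonneg (by have := hρpos (x + a); positivity)]
    exact mul_le_mul_of_nonneg_left (Real.rpow_le_rpow_of_nonpos hm (hρm _) (neg_nonpos.2 hκ))
      (Real.rpow_nonneg (by positivity) _)

lemma exists_integral_add_norm_rpow_neg_mul_rpow_neg_le (hlam : 0 < lam) (hκ : 0 < κ)
    (hr : finrank ℝ E + κ ≤ r) (hρ : LipschitzWith L ρ) (hm : 0 < m) (hρm : ∀ x, m ≤ ρ x) :
    ∃ K, ∀ a, ∫ x, (lam + ‖x‖) ^ (-r) * ρ (x + a) ^ (-κ) ∂μ ≤ K * ρ a ^ (-κ) := by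
  set d : ℝ := (finrank ℝ E : ℝ)
  have hd : 0 ≤ d := Nat.cast_nonneg _
  have hs : d < d + κ := by linarith
  refine ⟨2 ^ κ * ∫ x, (lam + ‖x‖) ^ (-r) ∂μ + m ^ (-κ) * (2 ^ (d + κ) * lam ^ (d + κ - r)
    * ((2 * (L + 1)) ^ κ * ∫ x, (1 + ‖x‖) ^ (-(d + κ)) ∂μ)), fun a => ?_⟩
  have hρa : 0 < ρ a := hm.trans_le (hρm a)
  have hR : 0 < ρ a / (2 * (L + 1)) := by positivity
  have hscale : (ρ a / (2 * (L + 1))) ^ (d - (d + κ)) = (2 * (L + 1)) ^ κ * ρ a ^ (-κ) := by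
    rw [sub_add_cancel_left, Real.div_rpow hρa.le (by positivity),
      Real.rpow_neg (x := 2 * (L + 1)) (by positivity), div_inv_eq_mul, mul_comm]
  have hnear := (integrable_add_norm_rpow_neg μ (s := r) (by linarith) hlam).const_mul
    (2 ^ κ * ρ a ^ (-κ))
  have hfar := ((integrable_add_norm_rpow_neg μ hs hR).const_mul
    (2 ^ (d + κ) * lam ^ (d + κ - r))).const_mul (m ^ (-κ))
  calc ∫ x, (lam + ‖x‖) ^ (-r) * ρ (x + a) ^ (-κ) ∂μ
      ≤ ∫ x, (2 ^ κ * ρ a ^ (-κ) * (lam + ‖x‖) ^ (-r)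
          + m ^ (-κ) * (2 ^ (d + κ) * lam ^ (d + κ - r)
            * (ρ a / (2 * (L + 1)) + ‖x‖) ^ (-(d + κ)))) ∂μ :=
        integral_mono
          (integrable_add_norm_rpow_neg_mul_rpow_neg μ hlam hκ.le (by linarith) hρ hm hρm a)
          (hnear.add hfar) fun x =>
            add_norm_rpow_neg_mul_rpow_neg_le hlam hκ.le (hd.trans hs.le) hr hρ hm hρm a x
    _ = _ := by
        rw [integral_add hnear hfar, integral_const_mul, integral_const_mul, integral_const_mul,
          integral_add_norm_rpow_neg μ _ hR, hscale]
        ring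

end WeightedIntegrals

def spatialPart (a : M4) : EuclideanSpace ℝ (Fin 3) := WithLp.toLp 2 fun i => a i.succ

lemma snorm3_eq_norm_spatialPart (a : M4) : snorm3 a = ‖spatialPart a‖ := by
  simp [snorm3, spatialPart, EuclideanSpace.norm_eq, Fin.sum_univ_three, add_assoc]

lemma snorm3_le_norm (a : M4) : snorm3 a ≤ ‖a‖ := by
  rw [snorm3, EuclideanSpace.norm_eq]
  gcongr
  simp only [Fin.sum_univ_four, Real.norm_eq_abs, sq_abs]
  nlinarith [sq_nonneg (a 0)]

lemma lipschitzWith_snorm3 : LipschitzWith 1 snorm3 :=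
  LipschitzWith.of_dist_le_mul fun a b => by
    simp only [snorm3_eq_norm_spatialPart, dist_eq_norm, NNReal.coe_one, one_mul]
    calc |‖spatialPart a‖ - ‖spatialPart b‖| ≤ ‖spatialPart a - spatialPart b‖ :=
          abs_norm_sub_norm_le _ _
      _ = snorm3 (a - b) := by rw [snorm3_eq_norm_spatialPart]; rfl
      _ ≤ ‖a - b‖ := snorm3_le_norm _

lemma lipschitzWith_abs_apply_zero : LipschitzWith 1 fun a : M4 => |a 0| :=
  LipschitzWith.of_dist_le_mul fun a b => by
    simp only [dist_eq_norm, NNReal.coe_one, one_mul]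
    exact (abs_abs_sub_abs_le_abs_sub _ _).trans (PiLp.norm_apply_le (a - b) 0)

def spacelikeExcess (a : M4) : ℝ := max (snorm3 a - |a 0|) 0

lemma spacelikeExcess_nonneg (a : M4) : 0 ≤ spacelikeExcess a := le_max_right _ _

lemma lipschitzWith_spacelikeExcess : LipschitzWith 2 spacelikeExcess := by
  have h := (lipschitzWith_snorm3.sub lipschitzWith_abs_apply_zero).max_const 0
  norm_num at h
  exact h

lemma Dkappa_eq {lam : ℝ} (κ : ℝ) (hlam : 0 < lam) (a : M4) :
    Dkappa lam κ a = lam ^ κ * (lam + spacelikeExcess a) ^ (-κ) := by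
  have hs : 0 ≤ snorm3 a := Real.sqrt_nonneg _
  unfold Dkappa spacelikeExcess
  split_ifs with h
  · rw [max_eq_right (by nlinarith [sq_abs (a 0), abs_nonneg (a 0)]),
      add_zero, Real.rpow_neg hlam.le, mul_inv_cancel₀ (Real.rpow_pos_of_pos hlam κ).ne']
  · have hlt : |a 0| < snorm3 a := by nlinarith [sq_abs (a 0), abs_nonneg (a 0)]
    rw [max_eq_left (by linarith), Real.rpow_neg (by linarith), add_sub_assoc, div_eq_mul_inv]

lemma lipschitzWith_const_add_spacelikeExcess (lam : ℝ) :
    LipschitzWith 2 fun a => lam + spacelikeExcess a := by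
  simpa using (LipschitzWith.const lam).add lipschitzWith_spacelikeExcess

lemma Dkappa_nonneg {lam : ℝ} (κ : ℝ) (hlam : 0 < lam) (a : M4) : 0 ≤ Dkappa lam κ a := by
  have := spacelikeExcess_nonneg a
  rw [Dkappa_eq κ hlam]
  positivity

lemma integrable_add_norm_rpow_neg_mul_Dkappa {lam κ r : ℝ} (hlam : 0 < lam) (hκ : 0 ≤ κ)
    (hr : 4 < r) (a : M4) :
    Integrable fun x : M4 => (lam + ‖x‖) ^ (-r) * Dkappa lam κ (x + a) := by
  simp_rw [Dkappa_eq κ hlam, mul_left_comm _ (lam ^ κ)]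
  refine (integrable_add_norm_rpow_neg_mul_rpow_neg volume hlam hκ ?_
    (lipschitzWith_const_add_spacelikeExcess lam) hlam
    (fun a => le_add_of_nonneg_right (spacelikeExcess_nonneg a)) a).const_mul _
  simpa using hr

lemma exists_integral_add_norm_rpow_neg_mul_Dkappa_le {lam κ r : ℝ} (hlam : 0 < lam)
    (hκ : 0 < κ) (hr : 4 + κ ≤ r) :
    ∃ K, ∀ a : M4, ∫ x, (lam + ‖x‖) ^ (-r) * Dkappa lam κ (x + a) ≤ K * Dkappa lam κ a := by
  obtain ⟨K, hK⟩ := exists_integral_add_norm_rpow_neg_mul_rpow_neg_le volume hlam hκ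
    (r := r) (by simpa using hr) (lipschitzWith_const_add_spacelikeExcess lam) hlam
    (fun a => le_add_of_nonneg_right (spacelikeExcess_nonneg a))
  refine ⟨K, fun a => ?_⟩
  simp_rw [Dkappa_eq κ hlam, mul_left_comm _ (lam ^ κ), integral_const_mul]
  exact mul_le_mul_of_nonneg_left (hK a) (by positivity)

/-- Stability of the `κ`-type condition under smearing (Lemma `stability` (i)):
if `‖[B₁, B₂(a)]‖ ≤ c·D_κ(a)` and `|χ(x)| ≤ C·(λ+|x|)^{−r}` with `r ≥ 4 + κ`, then
the commutator of `B₁` with the smeared operator `B₂(χ)` is again of `κ`-type. -/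
theorem stmt2 {H : Type*} [NormedAddCommGroup H] [InnerProductSpace ℂ H] [CompleteSpace H]
    (lam κ : ℝ) (hlam : 0 < lam) (hκ : 0 < κ)
    (U : M4 → H →L[ℂ] H)
    (hU0 : U 0 = 1) (hUadd : ∀ x y, U (x + y) = U x * U y)
    (hUadj : ∀ x, adjoint (U x) = U (-x)) (hUcont : ∀ ψ : H, Continuous fun x => U x ψ)
    (B₁ B₂ : H →L[ℂ] H) (c : ℝ)
    (hcomm : ∀ a : M4, ‖B₁ * (U a * B₂ * U (-a)) - (U a * B₂ * U (-a)) * B₁‖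
        ≤ c * Dkappa lam κ a)
    (χ : M4 → ℂ) (hχm : Measurable χ) (C r : ℝ) (hr : 4 + κ ≤ r)
    (hχb : ∀ x : M4, ‖χ x‖ ≤ C * (lam + ‖x‖) ^ (-r))
    (Bχ : H →L[ℂ] H)
    (hBχ : ∀ ψ : H, Bχ ψ = ∫ x : M4, χ x • ((U x * B₂ * U (-x)) ψ)) :
    ∃ c' : ℝ, ∀ a : M4,
      ‖B₁ * (U a * Bχ * U (-a)) - (U a * Bχ * U (-a)) * B₁‖ ≤ c' * Dkappa lam κ a := by
  have hU : IsContinuousUnitaryRep U := ⟨hU0, hUadd, hUadj, hUcont⟩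
  have hχ : Integrable χ :=
    ((integrable_add_norm_rpow_neg volume (by simp; linarith) hlam).const_mul C).mono'
      hχm.aestronglyMeasurable (.of_forall hχb)
  obtain ⟨K, hK⟩ := exists_integral_add_norm_rpow_neg_mul_Dkappa_le hlam hκ hr
  refine ⟨|C * c| * K, fun a => ?_⟩
  have hbound (x : M4) : ‖χ x‖ * ‖⁅B₁, translateOp U B₂ (x + a)⁆‖
      ≤ |C * c| * ((lam + ‖x‖) ^ (-r) * Dkappa lam κ (x + a)) :=
    calc _ ≤ C * (lam + ‖x‖) ^ (-r) * (c * Dkappa lam κ (x + a)) :=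
          mul_le_mul (hχb x) (hcomm (x + a)) (norm_nonneg _) ((norm_nonneg _).trans (hχb x))
      _ = C * c * ((lam + ‖x‖) ^ (-r) * Dkappa lam κ (x + a)) := by ring
      _ ≤ _ := mul_le_mul_of_nonneg_right (le_abs_self _)
          (mul_nonneg (by positivity) (Dkappa_nonneg κ hlam _))
  rw [← Ring.lie_def]
  calc ‖⁅B₁, translateOp U Bχ a⁆‖
      ≤ ∫ x, |C * c| * ((lam + ‖x‖) ^ (-r) * Dkappa lam κ (x + a)) :=
        hU.norm_lie_translateOp_le_of_smeared hχ hBχ B₁ a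
          ((integrable_add_norm_rpow_neg_mul_Dkappa hlam hκ.le (by linarith) a).const_mul _) hbound
    _ ≤ |C * c| * (K * Dkappa lam κ a) := by
        rw [integral_const_mul]
        exact mul_le_mul_of_nonneg_left (hK a) (abs_nonneg _)
    _ = |C * c| * K * Dkappa lam κ a := by ring
end
end

section
/- Let B₁, B₂ be bounded operators on H satisfying ‖[B₁, B₂(a)]‖ ≤ c·D_κ(a) for all a ∈ ℝ⁴. Let f : ℝ → ℂ be measurable with |f(τ)| ≤ C·(λ + |τ|)^{−s} for all τ, where s ≥ 1 + κ. Let B₂(f) be the time-smeared operator B₂(f)ψ = ∫ f(τ) B₂(τ·e₀)ψ dτ, where e₀ = (1,0,0,0). Then there exists a constant c' such that ‖[B₁, (B₂(f))(a)]‖ ≤ c'·D_κ(a) for all a ∈ ℝ⁴. -/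
/-!
Write `D_κ(a) = E(|a⃗| - |a⁰|)` with the decreasing profile `E(u) = λ^κ / (λ + max u 0)^κ`
(`kappaDecay`). Translating by `τ e₀` moves `|a⁰|` by at most `|τ|`, so
`‖[B₁, B₂(a + τ e₀)]‖ ≤ c E(d - |τ|)` with `d = |a⃗| - |a⁰|`, while
`[B₁, B₂(f)(a)] = ∫ f(τ) [B₁, B₂(a + τ e₀)] dτ`. It remains to bound
`∫ (λ + |τ|)^(-s) E(d - |τ|) dτ` by a multiple of `E(d)`: for `|τ| ≤ d/2` one has
`E(d - |τ|) ≤ 2^κ E(d)`, and on the tail `|τ| > d/2` the weight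
`(λ + |τ|)^(-s) ≤ λ^(1+κ-s) (λ + |τ|)^(-1-κ)` integrates to `O((λ + d/2)^(-κ)) = O(E(d))`.
At the borderline exponent `s = 1 + κ` no pointwise bound by `E(d)` times an integrable
function exists on the tail, which is why the tail integral is computed exactly.
-/

noncomputable section

open ContinuousLinearMap MeasureTheory

/-- The time-axis unit vector `e₀ = (1,0,0,0)`. -/
def e0 : M4 := EuclideanSpace.single 0 1

open Real Set Filter Topology

section Decay

variable {lam κ : ℝ}

def kappaDecay (lam κ u : ℝ) : ℝ := lam ^ κ / (lam + max u 0) ^ κ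

lemma kappaDecay_nonneg (hlam : 0 < lam) (u : ℝ) : 0 ≤ kappaDecay lam κ u := by
  unfold kappaDecay; positivity

lemma kappaDecay_of_nonpos (hlam : 0 < lam) {u : ℝ} (hu : u ≤ 0) : kappaDecay lam κ u = 1 := by
  rw [kappaDecay, max_eq_right hu, add_zero, div_self (rpow_pos_of_pos hlam κ).ne']

lemma kappaDecay_le_one (hlam : 0 < lam) (hκ : 0 ≤ κ) (u : ℝ) : kappaDecay lam κ u ≤ 1 := by
  rw [kappaDecay, div_le_one (by positivity)]
  exact rpow_le_rpow hlam.le (le_add_of_nonneg_right (le_max_right u 0)) hκ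

lemma kappaDecay_antitone (hlam : 0 < lam) (hκ : 0 ≤ κ) : Antitone (kappaDecay lam κ) := by
  intro u v huv
  unfold kappaDecay
  gcongr

lemma rpow_neg_add_max_eq_mul_kappaDecay (hlam : 0 < lam) (u : ℝ) :
    (lam + max u 0) ^ (-κ) = lam ^ (-κ) * kappaDecay lam κ u := by
  rw [kappaDecay, rpow_neg hlam.le, rpow_neg (by positivity), mul_div, inv_mul_cancel₀ (by positivity),
    one_div]

lemma kappaDecay_half_le (hlam : 0 < lam) (hκ : 0 ≤ κ) (u : ℝ) :
    kappaDecay lam κ (u / 2) ≤ 2 ^ κ * kappaDecay lam κ u := by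
  have h : lam + max u 0 ≤ 2 * (lam + max (u / 2) 0) := by
    rcases le_total u 0 with hu | hu
    · rw [max_eq_right hu, max_eq_right (by linarith)]; linarith
    · rw [max_eq_left hu, max_eq_left (by linarith)]; linarith
  have hpos : (0:ℝ) < lam + max (u / 2) 0 := by positivity
  calc kappaDecay lam κ (u / 2) = 2 ^ κ * lam ^ κ / (2 * (lam + max (u / 2) 0)) ^ κ := by
        rw [kappaDecay, mul_rpow (by norm_num) hpos.le, mul_div_mul_left _ _ (by positivity)]
    _ ≤ 2 ^ κ * lam ^ κ / (lam + max u 0) ^ κ := by gcongr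
    _ = 2 ^ κ * kappaDecay lam κ u := by rw [kappaDecay, mul_div_assoc]

end Decay

section PowerIntegrals

variable {lam p : ℝ}

lemma integrable_add_abs_rpow_neg (hlam : 0 < lam) (hp : 1 < p) :
    Integrable fun τ : ℝ => (lam + |τ|) ^ (-p) := by
  have h := ((integrable_one_add_norm (E := ℝ) (μ := volume) (r := p) (by simpa using hp)).comp_div
    hlam.ne').const_mul (lam ^ (-p))
  refine h.congr (ae_of_all _ fun τ => ?_)
  simp only [Real.norm_eq_abs, abs_div, abs_of_pos hlam]
  rw [← mul_rpow hlam.le (by positivity), mul_add, mul_one, mul_div_cancel₀ _ hlam.ne']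

lemma integral_Ioi_add_rpow_neg {R : ℝ} (hR : 0 < lam + R) (hp : 1 < p) :
    ∫ x in Ioi R, (lam + x) ^ (-p) = (lam + R) ^ (1 - p) / (p - 1) := by
  have hd : ∀ x ∈ Ici R,
      HasDerivAt (fun t => (lam + t) ^ (1 - p) / (1 - p)) ((lam + x) ^ (-p)) x := by
    intro x hx
    have hx : lam + x ≠ 0 := by linarith [mem_Ici.mp hx]
    refine ((((hasDerivAt_id' x).const_add lam).rpow_const (p := 1 - p) (Or.inl hx)).div_const
      (1 - p)).congr_deriv ?_
    rw [one_mul, mul_div_cancel_left₀ _ (by linarith : 1 - p ≠ 0), sub_sub_cancel_left]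
  have ht : Tendsto (fun t => (lam + t) ^ (1 - p) / (1 - p)) atTop (𝓝 0) := by
    have := ((tendsto_rpow_neg_atTop (by linarith : 0 < p - 1)).comp
      (tendsto_atTop_add_const_left _ lam tendsto_id)).div_const (1 - p)
    simpa [Function.comp_def] using this
  have hint : IntegrableOn (fun x => (lam + x) ^ (-p)) (Ioi R) := by
    simpa only [add_comm] using
      integrableOn_add_rpow_Ioi_of_lt (by linarith : -p < -1) (by linarith : -lam < R)
  rw [integral_Ioi_of_hasDerivAt_of_tendsto' hd hint ht]
  field_simp [show 1 - p ≠ 0 by linarith, show p - 1 ≠ 0 by linarith]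
  ring_nf

end PowerIntegrals

section Convolution

variable {lam κ s : ℝ}

lemma rpow_mul_kappaDecay_sub_le (hlam : 0 < lam) (hκ : 0 ≤ κ) (hs : 1 + κ ≤ s) (d : ℝ) {x : ℝ}
    (hx : 0 < x) :
    (lam + x) ^ (-s) * kappaDecay lam κ (d - x) ≤
      2 ^ κ * kappaDecay lam κ d * (lam + x) ^ (-s) +
        (Ioi (max (d / 2) 0)).indicator
          (fun y => lam ^ (1 + κ - s) * (lam + y) ^ (-(1 + κ))) x := by
  rcases le_or_gt x (max (d / 2) 0) with hxm | hxm
  · have hxd : x ≤ d / 2 := (le_max_iff.mp hxm).resolve_right hx.not_ge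
    rw [indicator_of_notMem (show x ∉ Ioi _ from not_lt.mpr hxm), add_zero, mul_comm]
    gcongr
    calc kappaDecay lam κ (d - x) ≤ kappaDecay lam κ (d / 2) :=
          kappaDecay_antitone hlam hκ (by linarith)
      _ ≤ 2 ^ κ * kappaDecay lam κ d := kappaDecay_half_le hlam hκ d
  · rw [indicator_of_mem (show x ∈ Ioi _ from hxm)]
    have hsplit : (lam + x) ^ (-s) = (lam + x) ^ (1 + κ - s) * (lam + x) ^ (-(1 + κ)) := by
      rw [← rpow_add (by positivity)]; ring_nf
    calc (lam + x) ^ (-s) * kappaDecay lam κ (d - x) ≤ (lam + x) ^ (-s) :=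
          mul_le_of_le_one_right (by positivity) (kappaDecay_le_one hlam hκ _)
      _ ≤ lam ^ (1 + κ - s) * (lam + x) ^ (-(1 + κ)) := by
          rw [hsplit]
          exact mul_le_mul_of_nonneg_right
            (rpow_le_rpow_of_nonpos hlam (by linarith) (by linarith)) (by positivity)
      _ ≤ _ := le_add_of_nonneg_left
          (mul_nonneg (mul_nonneg (by positivity) (kappaDecay_nonneg hlam d)) (by positivity))

lemma integrable_rpow_mul_kappaDecay (hlam : 0 < lam) (hκ : 0 ≤ κ) (hs : 1 < s) (d : ℝ) :
    Integrable fun τ : ℝ => (lam + |τ|) ^ (-s) * kappaDecay lam κ (d - |τ|) :=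
  (integrable_add_abs_rpow_neg hlam hs).mul_bdd
    ((kappaDecay_antitone hlam hκ).measurable.comp (by fun_prop)).aestronglyMeasurable
    (ae_of_all _ fun τ => by
      rw [Real.norm_eq_abs, abs_of_nonneg (kappaDecay_nonneg hlam _)]
      exact kappaDecay_le_one hlam hκ _)

lemma setIntegral_Ioi_rpow_mul_kappaDecay_le (hlam : 0 < lam) (hκ : 0 < κ) (hs : 1 + κ ≤ s)
    (d : ℝ) :
    ∫ x in Ioi 0, (lam + x) ^ (-s) * kappaDecay lam κ (d - x) ≤
      2 ^ κ * kappaDecay lam κ d * (lam ^ (1 - s) / (s - 1)) +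
        lam ^ (1 + κ - s) * ((lam + max (d / 2) 0) ^ (-κ) / κ) := by
  set m := max (d / 2) 0
  have hm0 : 0 ≤ m := le_max_right _ _
  set tail := fun y => lam ^ (1 + κ - s) * (lam + y) ^ (-(1 + κ))
  have hint₁ : IntegrableOn (fun x => (lam + x) ^ (-s)) (Ioi 0) := by
    simpa only [add_comm] using
      integrableOn_add_rpow_Ioi_of_lt (by linarith : -s < -1) (by linarith : -lam < 0)
  have hint₂ : IntegrableOn tail (Ioi m) := by
    have h : IntegrableOn (fun y => (lam + y) ^ (-(1 + κ))) (Ioi m) := by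
      simpa only [add_comm] using
        integrableOn_add_rpow_Ioi_of_lt (by linarith : -(1 + κ) < -1) (by linarith : -lam < m)
    exact h.const_mul _
  have hint₃ := (hint₂.integrable_indicator measurableSet_Ioi).integrableOn (s := Ioi 0)
  calc ∫ x in Ioi 0, (lam + x) ^ (-s) * kappaDecay lam κ (d - x)
      ≤ ∫ x in Ioi 0, (2 ^ κ * kappaDecay lam κ d * (lam + x) ^ (-s) + (Ioi m).indicator tail x) :=
        integral_mono_of_nonneg
          ((ae_restrict_iff' measurableSet_Ioi).mpr (ae_of_all _ fun x (hx : 0 < x) =>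
            mul_nonneg (by positivity) (kappaDecay_nonneg hlam _)))
          ((hint₁.const_mul _).add hint₃)
          ((ae_restrict_iff' measurableSet_Ioi).mpr (ae_of_all _ fun x hx =>
            rpow_mul_kappaDecay_sub_le hlam hκ.le hs d hx))
    _ = _ := by
      rw [integral_add (hint₁.const_mul _) hint₃, integral_const_mul,
        setIntegral_indicator measurableSet_Ioi, Ioi_inter_Ioi, sup_eq_right.mpr hm0,
        integral_const_mul, integral_Ioi_add_rpow_neg (by linarith) (by linarith),
        integral_Ioi_add_rpow_neg (by linarith) (by linarith), add_zero]
      ring_nf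

lemma integral_rpow_mul_kappaDecay_le (hlam : 0 < lam) (hκ : 0 < κ) (hs : 1 + κ ≤ s) (d : ℝ) :
    ∫ τ, (lam + |τ|) ^ (-s) * kappaDecay lam κ (d - |τ|) ≤
      2 ^ (κ + 1) * lam ^ (1 - s) * (1 / (s - 1) + 1 / κ) * kappaDecay lam κ d := by
  have htail : lam ^ (1 + κ - s) * (lam + max (d / 2) 0) ^ (-κ) ≤
      2 ^ κ * lam ^ (1 - s) * kappaDecay lam κ d := by
    rw [rpow_neg_add_max_eq_mul_kappaDecay hlam, ← mul_assoc, ← rpow_add hlam,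
      show 1 + κ - s + -κ = 1 - s by ring]
    calc lam ^ (1 - s) * kappaDecay lam κ (d / 2)
        ≤ lam ^ (1 - s) * (2 ^ κ * kappaDecay lam κ d) := by
          gcongr; exact kappaDecay_half_le hlam hκ.le d
      _ = _ := by ring
  rw [integral_comp_abs (f := fun x => (lam + x) ^ (-s) * kappaDecay lam κ (d - x))]
  refine (mul_le_mul_of_nonneg_left (setIntegral_Ioi_rpow_mul_kappaDecay_le hlam hκ hs d)
    zero_le_two).trans ?_
  calc 2 * (2 ^ κ * kappaDecay lam κ d * (lam ^ (1 - s) / (s - 1)) +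
        lam ^ (1 + κ - s) * ((lam + max (d / 2) 0) ^ (-κ) / κ))
      ≤ 2 * (2 ^ κ * kappaDecay lam κ d * (lam ^ (1 - s) / (s - 1)) +
        2 ^ κ * lam ^ (1 - s) * kappaDecay lam κ d / κ) := by
        gcongr 2 * (_ + ?_)
        rw [← mul_div_assoc]
        exact div_le_div_of_nonneg_right htail hκ.le
    _ = _ := by rw [rpow_add_one two_ne_zero]; ring

end Convolution

section Minkowski

variable {lam κ : ℝ}

lemma Dkappa_zero : Dkappa lam κ 0 = 1 := by
  simp [Dkappa, snorm3]

lemma Dkappa_eq_kappaDecay (hlam : 0 < lam) (a : M4) :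
    Dkappa lam κ a = kappaDecay lam κ (snorm3 a - |a 0|) := by
  have hr : |snorm3 a| = snorm3 a := abs_of_nonneg (Real.sqrt_nonneg _)
  unfold Dkappa
  split_ifs with h <;> rw [sq_le_sq, hr] at h
  · rw [kappaDecay_of_nonpos hlam (by linarith)]
  · rw [kappaDecay, max_eq_left (by linarith), add_sub_assoc]

lemma add_smul_e0_apply_zero (a : M4) (τ : ℝ) : (a + τ • e0) 0 = a 0 + τ := by
  simp [e0]

lemma snorm3_add_smul_e0 (a : M4) (τ : ℝ) : snorm3 (a + τ • e0) = snorm3 a := by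
  simp [snorm3, e0]

lemma Dkappa_add_smul_e0_le (hlam : 0 < lam) (hκ : 0 ≤ κ) (a : M4) (τ : ℝ) :
    Dkappa lam κ (a + τ • e0) ≤ kappaDecay lam κ (snorm3 a - |a 0| - |τ|) := by
  rw [Dkappa_eq_kappaDecay hlam, snorm3_add_smul_e0, add_smul_e0_apply_zero]
  exact kappaDecay_antitone hlam hκ (by linarith [abs_add_le (a 0) τ])

end Minkowski

section Representation

variable {𝕜 E F : Type*} [RCLike 𝕜] [NormedAddCommGroup E] [NormedSpace 𝕜 E]
  [NormedAddCommGroup F] [NormedSpace 𝕜 F]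

lemma continuous_apply_of_norm_apply_le {X : Type*} [TopologicalSpace X] {T : X → E →L[𝕜] F}
    {M : ℝ} (hT : ∀ x v, ‖T x v‖ ≤ M * ‖v‖) (hTc : ∀ v, Continuous fun x => T x v) {g : X → E}
    (hg : Continuous g) : Continuous fun x => T x (g x) := by
  refine continuous_iff_continuousAt.mpr fun x₀ => ?_
  have h : Tendsto (fun x => T x (g x - g x₀)) (𝓝 x₀) (𝓝 0) :=
    squeeze_zero_norm (fun x => hT x _)
      (by simpa using (((hg.tendsto x₀).sub_const (g x₀)).norm.const_mul M))
  simpa [ContinuousAt] using h.add ((hTc (g x₀)).tendsto x₀)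

variable {G : Type*} [AddGroup G] {U : G → E →L[𝕜] E}

lemma conj_conj_eq_conj_add (hUadd : ∀ x y, U (x + y) = U x * U y) (a b : G) (B : E →L[𝕜] E) :
    U a * (U b * B * U (-b)) * U (-a) = U (a + b) * B * U (-(a + b)) := by
  simp only [neg_add_rev, hUadd, mul_assoc]

lemma norm_conj_apply_le (hU : ∀ x ψ, ‖U x ψ‖ = ‖ψ‖) (x : G) (B : E →L[𝕜] E) (ψ : E) :
    ‖(U x * B * U (-x)) ψ‖ ≤ ‖B‖ * ‖ψ‖ := by
  simpa only [mul_apply_eq_comp, hU] using B.le_opNorm (U (-x) ψ)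

lemma continuous_conj_apply [TopologicalSpace G] [ContinuousNeg G] (hU : ∀ x ψ, ‖U x ψ‖ = ‖ψ‖)
    (hUc : ∀ ψ, Continuous fun x => U x ψ) (B : E →L[𝕜] E) (ψ : E) :
    Continuous fun x => (U x * B * U (-x)) ψ :=
  continuous_apply_of_norm_apply_le (M := 1) (fun x v => (hU x v).trans_le (one_mul _).ge) hUc
    (B.continuous.comp ((hUc ψ).comp continuous_neg))

lemma integrable_smul_conj_apply [TopologicalSpace G] [ContinuousNeg G]
    (hU : ∀ x ψ, ‖U x ψ‖ = ‖ψ‖) (hUc : ∀ ψ, Continuous fun x => U x ψ) {f : ℝ → 𝕜}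
    (hf : Integrable f) {x : ℝ → G} (hx : Continuous x) (B : E →L[𝕜] E) (ψ : E) :
    Integrable fun τ => f τ • (U (x τ) * B * U (-x τ)) ψ :=
  hf.smul_bdd _ ((continuous_conj_apply hU hUc B ψ).comp hx).aestronglyMeasurable
    (ae_of_all _ fun τ => norm_conj_apply_le hU (x τ) B ψ)

lemma norm_apply_of_adjoint_eq_neg {H : Type*} [NormedAddCommGroup H] [InnerProductSpace 𝕜 H]
    [CompleteSpace H] {U : G → H →L[𝕜] H} (hU0 : U 0 = 1)
    (hUadd : ∀ x y, U (x + y) = U x * U y) (hUadj : ∀ x, adjoint (U x) = U (-x)) (x : G) (ψ : H) :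
    ‖U x ψ‖ = ‖ψ‖ :=
  (U x).norm_map_iff_adjoint_comp_self.mpr
    (by rw [hUadj, ← mul_def, ← hUadd, neg_add_cancel, hU0, one_def]) ψ

end Representation

section SmearedOperators

variable {α E : Type*} [MeasurableSpace α] {μ : Measure α} [NormedAddCommGroup E]
  [NormedSpace ℂ E] [CompleteSpace E] {T : E →L[ℂ] E} {f : α → ℂ} {V : α → E →L[ℂ] E}

lemma conj_apply_eq_integral (hT : ∀ ψ, T ψ = ∫ τ, f τ • V τ ψ ∂μ)
    (hint : ∀ ψ, Integrable (fun τ => f τ • V τ ψ) μ) (W W' : E →L[ℂ] E) (ψ : E) :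
    (W * T * W') ψ = ∫ τ, f τ • (W * V τ * W') ψ ∂μ := by
  simp only [mul_apply_eq_comp, hT, ← W.integral_comp_comm (hint _), map_smul]

lemma norm_commutator_le_integral (A : E →L[ℂ] E) (hT : ∀ ψ, T ψ = ∫ τ, f τ • V τ ψ ∂μ)
    (hint : ∀ ψ, Integrable (fun τ => f τ • V τ ψ) μ) {g : α → ℝ} (hg : Integrable g μ)
    (hbound : ∀ τ, ‖f τ‖ * ‖A * V τ - V τ * A‖ ≤ g τ) :
    ‖A * T - T * A‖ ≤ ∫ τ, g τ ∂μ := by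
  have hcomm : ∀ ψ, (A * T - T * A) ψ = ∫ τ, f τ • (A * V τ - V τ * A) ψ ∂μ := by
    intro ψ
    rw [sub_apply, mul_apply_eq_comp, mul_apply_eq_comp, hT, hT, ← A.integral_comp_comm (hint ψ),
      ← integral_sub (A.integrable_comp (hint ψ)) (hint (A ψ))]
    simp only [map_smul, sub_apply, mul_apply_eq_comp, smul_sub]
  refine opNorm_le_bound _
    (integral_nonneg fun τ => (by positivity : (0 : ℝ) ≤ ‖f τ‖ * _).trans (hbound τ)) fun ψ => ?_
  rw [hcomm, ← integral_mul_const]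
  refine norm_integral_le_of_norm_le (hg.mul_const _) (ae_of_all _ fun τ => ?_)
  calc ‖f τ • (A * V τ - V τ * A) ψ‖ ≤ ‖f τ‖ * (‖A * V τ - V τ * A‖ * ‖ψ‖) := by
        rw [norm_smul]; gcongr; exact le_opNorm _ _
    _ ≤ g τ * ‖ψ‖ := by rw [← mul_assoc]; gcongr; exact hbound τ

end SmearedOperators

/-- Stability of the `κ`-type condition under time smearing (Lemma `stability` (ii)):
if `‖[B₁, B₂(a)]‖ ≤ c·D_κ(a)` and `|f(τ)| ≤ C·(λ+|τ|)^{−s}` with `s ≥ 1 + κ`, then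
the commutator of `B₁` with the time-smeared operator `B₂(f)` is again of `κ`-type. -/
theorem stmt3 {H : Type*} [NormedAddCommGroup H] [InnerProductSpace ℂ H] [CompleteSpace H]
    (lam κ : ℝ) (hlam : 0 < lam) (hκ : 0 < κ)
    (U : M4 → H →L[ℂ] H)
    (hU0 : U 0 = 1) (hUadd : ∀ x y, U (x + y) = U x * U y)
    (hUadj : ∀ x, adjoint (U x) = U (-x)) (hUcont : ∀ ψ : H, Continuous fun x => U x ψ)
    (B₁ B₂ : H →L[ℂ] H) (c : ℝ)
    (hcomm : ∀ a : M4, ‖B₁ * (U a * B₂ * U (-a)) - (U a * B₂ * U (-a)) * B₁‖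
        ≤ c * Dkappa lam κ a)
    (f : ℝ → ℂ) (hfm : Measurable f) (C s : ℝ) (hs : 1 + κ ≤ s)
    (hfb : ∀ τ : ℝ, ‖f τ‖ ≤ C * (lam + |τ|) ^ (-s))
    (Bf : H →L[ℂ] H)
    (hBf : ∀ ψ : H, Bf ψ = ∫ τ : ℝ, f τ • ((U (τ • e0) * B₂ * U (-(τ • e0))) ψ)) :
    ∃ c' : ℝ, ∀ a : M4,
      ‖B₁ * (U a * Bf * U (-a)) - (U a * Bf * U (-a)) * B₁‖ ≤ c' * Dkappa lam κ a := by
  have hs1 : 1 < s := by linarith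
  have hU := norm_apply_of_adjoint_eq_neg hU0 hUadd hUadj
  have hc : 0 ≤ c := by simpa [Dkappa_zero] using (norm_nonneg _).trans (hcomm 0)
  have hC : 0 ≤ C :=
    nonneg_of_mul_nonneg_left ((norm_nonneg _).trans (hfb 0)) (by positivity)
  have hf : Integrable f := ((integrable_add_abs_rpow_neg hlam hs1).const_mul C).mono'
    hfm.aestronglyMeasurable (ae_of_all _ hfb)
  have hint := fun {x : ℝ → M4} (hx : Continuous x) ψ =>
    integrable_smul_conj_apply hU hUcont hf hx B₂ ψ
  refine ⟨c * C * (2 ^ (κ + 1) * lam ^ (1 - s) * (1 / (s - 1) + 1 / κ)), fun a => ?_⟩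
  have hBfa : ∀ ψ, (U a * Bf * U (-a)) ψ =
      ∫ τ : ℝ, f τ • (U (a + τ • e0) * B₂ * U (-(a + τ • e0))) ψ := fun ψ => by
    simp only [conj_apply_eq_integral hBf (hint (by fun_prop)), conj_conj_eq_conj_add hUadd]
  have hbound : ∀ τ : ℝ, ‖f τ‖ * ‖B₁ * (U (a + τ • e0) * B₂ * U (-(a + τ • e0))) -
      (U (a + τ • e0) * B₂ * U (-(a + τ • e0))) * B₁‖ ≤
      c * C * ((lam + |τ|) ^ (-s) * kappaDecay lam κ (snorm3 a - |a 0| - |τ|)) := fun τ =>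
    calc _ ≤ C * (lam + |τ|) ^ (-s) * (c * kappaDecay lam κ (snorm3 a - |a 0| - |τ|)) :=
          mul_le_mul (hfb τ) ((hcomm _).trans (mul_le_mul_of_nonneg_left
            (Dkappa_add_smul_e0_le hlam hκ.le a τ) hc)) (norm_nonneg _)
            (mul_nonneg hC (by positivity))
      _ = _ := by ring
  calc _ ≤ ∫ τ : ℝ, c * C * ((lam + |τ|) ^ (-s) * kappaDecay lam κ (snorm3 a - |a 0| - |τ|)) :=
        norm_commutator_le_integral B₁ hBfa (hint (by fun_prop))
          ((integrable_rpow_mul_kappaDecay hlam hκ.le hs1 _).const_mul _) hbound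
    _ ≤ _ := by
      rw [integral_const_mul, Dkappa_eq_kappaDecay hlam, mul_assoc (c * C)]
      exact mul_le_mul_of_nonneg_left (integral_rpow_mul_kappaDecay_le hlam hκ hs _)
        (mul_nonneg hc hC)
end
end
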